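/- Let m, n, r be nonnegative integers with 0 ≤ r < m. Then Σ_{j=1}^∞ (−1)^{j+1} · a_{r,m}(n − j(3j+1)/2) = Σ_{j=0}^∞ (mj + r)·R(n − mj − r). -/

import Mathlib

noncomputable section

/-- `partitionCount n` is the number of partitions of `n`. -/
def partitionCount (n : ℕ) : ℕ := Nat.card (Nat.Partition n)

/-- `p` extended to `ℤ`, vanishing on negative arguments. -/
def pZ (x : ℤ) : ℤ := if 0 ≤ x then partitionCount x.toNat else 0

/-- `a r m n` is the sum of all different parts congruent to `r` mod `m`
in all partitions of `n` (each distinct part value counted once per partition). -/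
def a (r m n : ℕ) : ℕ :=
  ∑ l : Nat.Partition n, ∑ d ∈ l.parts.toFinset, if d % m = r then d else 0

/-- `a r m` extended to `ℤ`, vanishing on negative arguments. -/
def aZ (r m : ℕ) (x : ℤ) : ℤ := if 0 ≤ x then a r m x.toNat else 0

/-- `s m n` is the sum of different parts appearing at least `m` times
in all partitions of `n` (each such distinct part value counted once per partition). -/
def s (m n : ℕ) : ℕ :=
  ∑ l : Nat.Partition n, ∑ d ∈ l.parts.toFinset, if m ≤ l.parts.count d then d else 0

/-- `s m` extended to `ℤ`, vanishing on negative arguments. -/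
def sZ (m : ℕ) (x : ℤ) : ℤ := if 0 ≤ x then s m x.toNat else 0

/-- `peo n = p_e(n) - p_o(n)`: partitions with an even number of parts minus
partitions with an odd number of parts. -/
def peo (n : ℕ) : ℤ :=
  (Nat.card {l : Nat.Partition n // Even (Multiset.card l.parts)} : ℤ) -
    (Nat.card {l : Nat.Partition n // Odd (Multiset.card l.parts)} : ℤ)

/-- `peo` extended to `ℤ`, vanishing on negative arguments. -/
def peoZ (x : ℤ) : ℤ := if 0 ≤ x then peo x.toNat else 0

/-- Number of partitions of `n` into distinct parts, all odd. -/
def qodd (n : ℕ) : ℕ :=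
  Nat.card {l : Nat.Partition n // l.parts.Nodup ∧ ∀ d ∈ l.parts, Odd d}

/-- `qodd` extended to `ℤ`, vanishing on negative arguments. -/
def qoddZ (x : ℤ) : ℤ := if 0 ≤ x then qodd x.toNat else 0

/-- Number of partitions of `n` into distinct parts. -/
def q (n : ℕ) : ℕ := Nat.card {l : Nat.Partition n // l.parts.Nodup}

/-- `q(x/2)`, set to `0` whenever `x/2` is not a nonnegative integer. -/
def qHalfZ (x : ℤ) : ℤ := if 0 ≤ x ∧ 2 ∣ x then q (x.toNat / 2) else 0

/-- The rank of a partition: its largest part minus its number of parts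
(the empty partition has rank 0). -/
def rank {n : ℕ} (l : Nat.Partition n) : ℤ :=
  (l.parts.sup : ℤ) - Multiset.card l.parts

/-- Number of partitions of `n` with nonnegative rank. -/
def N (n : ℕ) : ℕ := Nat.card {l : Nat.Partition n // 0 ≤ rank l}

/-- `N` extended to `ℤ`, vanishing on negative arguments. -/
def NZ (x : ℤ) : ℤ := if 0 ≤ x then N x.toNat else 0

/-- Number of partitions of `n` with positive rank. -/
def R (n : ℕ) : ℕ := Nat.card {l : Nat.Partition n // 0 < rank l}

/-- `R` extended to `ℤ`, vanishing on negative arguments. -/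
def RZ (x : ℤ) : ℤ := if 0 ≤ x then R x.toNat else 0

/-- Number of Garden of Eden partitions of `n`, i.e. partitions of rank at most `-2`. -/
def G (n : ℕ) : ℕ := Nat.card {l : Nat.Partition n // rank l ≤ -2}

/-- `G` extended to `ℤ`, vanishing on negative arguments. -/
def GZ (x : ℤ) : ℤ := if 0 ≤ x then G x.toNat else 0

/-- The crank of a partition: the largest part if no part equals 1, and otherwise
the number of parts larger than the multiplicity of 1 minus that multiplicity. -/
def crank {n : ℕ} (l : Nat.Partition n) : ℤ :=
  if Multiset.count 1 l.parts = 0 then (l.parts.sup : ℤ)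
  else (Multiset.card (Multiset.filter (fun d => Multiset.count 1 l.parts < d) l.parts) : ℤ)
    - Multiset.count 1 l.parts

/-- Number of partitions of `n` with nonnegative crank. -/
def C (n : ℕ) : ℕ := Nat.card {l : Nat.Partition n // 0 ≤ crank l}

/-- `C` extended to `ℤ`, vanishing on negative arguments. -/
def CZ (x : ℤ) : ℤ := if 0 ≤ x then C x.toNat else 0

/-- Number of partitions of `n` with positive crank. -/
def D (n : ℕ) : ℕ := Nat.card {l : Nat.Partition n // 0 < crank l}

/-- `D` extended to `ℤ`, vanishing on negative arguments. -/
def DZ (x : ℤ) : ℤ := if 0 ≤ x then D x.toNat else 0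

/-- The minimal excludant of a partition: the least positive integer that is not a part. -/
def mex {n : ℕ} (l : Nat.Partition n) : ℕ := sInf {k : ℕ | 0 < k ∧ k ∉ l.parts}

/-!
The partitions of `n` containing a part `d` correspond to the partitions of `n - d`, so
`a_{r,m}(x) = ∑_j (mj + r) p(x - mj - r)`. Dyson's map (remove the first column of the Young
diagram, then add a part `s + 1` longer than that column) is a bijection from the partitions of
`n` with rank at most `s + 2` onto the partitions of `n + s + 1` with rank at least `s`. Hence the
number `A_s(x)` of partitions of `x` with rank at least `s ≥ 1` satisfies
`A_s(x) = p(x - s - 1) - A_{s+3}(x - s - 1)`, and unrolling this from `R = A_1` gives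
`R(x) = ∑_{k ≥ 0} (-1)^k p(x - (k+1)(3k+4)/2)`. Substituting both expansions turns each side of
the identity into the double sum `∑_{j,k} (-1)^k (mj + r) p(n - mj - r - (k+1)(3k+4)/2)`.
-/

namespace Multiset

theorem sup_mem_of_ne_zero {α : Type*} [LinearOrder α] [OrderBot α] {t : Multiset α}
    (ht : t ≠ 0) : t.sup ∈ t := by
  induction t using Multiset.induction with
  | empty => exact absurd rfl ht
  | cons a s ih =>
    rw [sup_cons]
    rcases eq_or_ne s 0 with rfl | hs
    · simp
    · rcases le_total a s.sup with h | h
      · rw [sup_eq_right.mpr h]; exact mem_cons_of_mem (ih hs)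
      · rw [sup_eq_left.mpr h]; exact mem_cons_self a s

def dropFirstColumn (t : Multiset ℕ) : Multiset ℕ := (t.filter (1 < ·)).map (· - 1)

-- The added first column has length `card t + k`.
def addFirstColumn (t : Multiset ℕ) (k : ℕ) : Multiset ℕ := t.map (· + 1) + replicate k 1

theorem sum_dropFirstColumn_add_card {t : Multiset ℕ} (ht : ∀ x ∈ t, 0 < x) :
    (dropFirstColumn t).sum + card t = t.sum := by
  induction t using Multiset.induction with
  | empty => simp [dropFirstColumn]
  | cons a s ih =>
    have ha := ht a (mem_cons_self a s)
    have hs := ih fun x hx => ht x (mem_cons_of_mem hx)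
    unfold dropFirstColumn at hs ⊢
    by_cases h : 1 < a
    · rw [filter_cons_of_pos (p := (1 < ·)) _ h]
      simp only [map_cons, sum_cons, card_cons]
      omega
    · rw [filter_cons_of_neg (p := (1 < ·)) _ h]
      simp only [sum_cons, card_cons]
      omega

theorem card_dropFirstColumn_le (t : Multiset ℕ) : card (dropFirstColumn t) ≤ card t := by
  simpa [dropFirstColumn] using card_le_card (filter_le _ t)

theorem le_sup_sub_one_of_mem_dropFirstColumn {t : Multiset ℕ} {x : ℕ}
    (hx : x ∈ dropFirstColumn t) : x ≤ t.sup - 1 := by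
  obtain ⟨y, hy, rfl⟩ := mem_map.mp hx
  exact Nat.sub_le_sub_right (le_sup (mem_of_mem_filter hy)) 1

theorem addFirstColumn_dropFirstColumn {t : Multiset ℕ} (ht : ∀ x ∈ t, 0 < x) :
    addFirstColumn (dropFirstColumn t) (card t - card (dropFirstColumn t)) = t := by
  have hrows : ((t.filter (1 < ·)).map (· - 1)).map (· + 1) = t.filter (1 < ·) := by
    rw [map_map]
    exact (map_congr rfl fun x hx => by
      have := (mem_filter.mp hx).2; simp only [Function.comp_apply, id]; omega).trans (map_id _)
  have hcard := congrArg card (filter_add_not (1 < ·) t)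
  have hones : replicate (card t - card (dropFirstColumn t)) 1 = t.filter (¬ 1 < ·) := by
    rw [eq_comm, eq_replicate]
    refine ⟨by simp only [dropFirstColumn, card_map, card_add] at hcard ⊢; omega, ?_⟩
    intro b hb
    have := ht b (mem_of_mem_filter hb)
    have := (mem_filter.mp hb).2
    omega
  rw [addFirstColumn, dropFirstColumn, hrows, ← dropFirstColumn, hones, filter_add_not]

theorem dropFirstColumn_addFirstColumn {t : Multiset ℕ} (ht : ∀ x ∈ t, 0 < x) (k : ℕ) :
    dropFirstColumn (addFirstColumn t k) = t := by
  have hrows : (t.map (· + 1)).filter (1 < ·) = t.map (· + 1) :=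
    filter_eq_self.mpr fun x hx => by
      obtain ⟨y, hy, rfl⟩ := mem_map.mp hx
      have := ht y hy
      omega
  have hones : (replicate k 1).filter (1 < ·) = 0 :=
    filter_eq_nil.mpr fun x hx => by rw [eq_of_mem_replicate hx]; decide
  rw [dropFirstColumn, addFirstColumn, filter_add, hrows, hones, add_zero, map_map]
  exact (map_congr rfl fun x _ => by simp).trans (map_id _)

theorem sum_addFirstColumn (t : Multiset ℕ) (k : ℕ) :
    (addFirstColumn t k).sum = t.sum + card t + k := by
  simp [addFirstColumn, sum_map_add, add_assoc]

theorem card_addFirstColumn (t : Multiset ℕ) (k : ℕ) :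
    card (addFirstColumn t k) = card t + k := by
  simp [addFirstColumn]

theorem sup_addFirstColumn_le (t : Multiset ℕ) (k : ℕ) :
    (addFirstColumn t k).sup ≤ t.sup + 1 := by
  refine Multiset.sup_le.mpr fun x hx => ?_
  rcases mem_add.mp hx with hx | hx
  · obtain ⟨y, hy, rfl⟩ := mem_map.mp hx
    exact Nat.add_le_add_right (le_sup hy) 1
  · rw [eq_of_mem_replicate hx]; omega

theorem pos_of_mem_dropFirstColumn {t : Multiset ℕ} {x : ℕ} (hx : x ∈ dropFirstColumn t) :
    0 < x := by
  obtain ⟨y, hy, rfl⟩ := mem_map.mp hx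
  have := (mem_filter.mp hy).2
  omega

theorem pos_of_mem_addFirstColumn {t : Multiset ℕ} {k x : ℕ} (hx : x ∈ addFirstColumn t k) :
    0 < x := by
  rcases mem_add.mp hx with hx | hx
  · obtain ⟨y, _, rfl⟩ := mem_map.mp hx
    omega
  · rw [eq_of_mem_replicate hx]
    exact Nat.one_pos

end Multiset

section Dyson

open Multiset

variable {n : ℕ}

theorem Nat.Partition.sup_mem_parts (l : Nat.Partition n) (hn : n ≠ 0) :
    l.parts.sup ∈ l.parts :=
  sup_mem_of_ne_zero fun h => hn (by rw [← l.parts_sum, h, sum_zero])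

theorem card_erase_sup_add_lt_sup {s : ℕ} (l : Nat.Partition (n + s + 1))
    (h : (s : ℤ) ≤ rank l) : card (l.parts.erase l.parts.sup) + s < l.parts.sup := by
  have hmem := l.sup_mem_parts (by omega)
  have hcard := card_erase_add_one hmem
  simp only [rank] at h
  omega

def dysonMap (s : ℕ) (l : Nat.Partition n) : Nat.Partition (n + s + 1) where
  parts := (card l.parts + s + 1) ::ₘ dropFirstColumn l.parts
  parts_pos hi := by
    rcases mem_cons.mp hi with rfl | hi
    · omega
    · exact pos_of_mem_dropFirstColumn hi
  parts_sum := by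
    have := sum_dropFirstColumn_add_card fun x hx => l.parts_pos hx
    rw [l.parts_sum] at this
    rw [sum_cons]
    omega

theorem dysonMap_parts (s : ℕ) (l : Nat.Partition n) :
    (dysonMap s l).parts = (card l.parts + s + 1) ::ₘ dropFirstColumn l.parts := rfl

theorem le_rank_dysonMap (s : ℕ) (l : Nat.Partition n) : (s : ℤ) ≤ rank (dysonMap s l) := by
  have hsup : card l.parts + s + 1 ≤ (dysonMap s l).parts.sup := le_sup (mem_cons_self _ _)
  have hcard := card_dropFirstColumn_le l.parts
  simp only [rank, dysonMap_parts, card_cons] at hsup ⊢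
  omega

theorem sup_dysonMap {s : ℕ} {l : Nat.Partition n} (h : rank l ≤ s + 2) :
    (dysonMap s l).parts.sup = card l.parts + s + 1 := by
  rw [dysonMap_parts, sup_cons, sup_eq_left, Multiset.sup_le]
  intro x hx
  have := le_sup_sub_one_of_mem_dropFirstColumn hx
  simp only [rank] at h
  omega

def dysonInv (s : ℕ) (l : Nat.Partition (n + s + 1)) (h : (s : ℤ) ≤ rank l) :
    Nat.Partition n where
  parts := addFirstColumn (l.parts.erase l.parts.sup)
    (l.parts.sup - (s + 1) - card (l.parts.erase l.parts.sup))
  parts_pos hi := pos_of_mem_addFirstColumn hi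
  parts_sum := by
    have hsum := sum_erase (l.sup_mem_parts (by omega))
    have hlt := card_erase_sup_add_lt_sup l h
    rw [l.parts_sum] at hsum
    rw [sum_addFirstColumn]
    omega

theorem dysonInv_parts (s : ℕ) (l : Nat.Partition (n + s + 1)) (h : (s : ℤ) ≤ rank l) :
    (dysonInv s l h).parts = addFirstColumn (l.parts.erase l.parts.sup)
      (l.parts.sup - (s + 1) - card (l.parts.erase l.parts.sup)) := rfl

theorem card_dysonInv (s : ℕ) (l : Nat.Partition (n + s + 1)) (h : (s : ℤ) ≤ rank l) :
    card (dysonInv s l h).parts + s + 1 = l.parts.sup := by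
  have := card_erase_sup_add_lt_sup l h
  rw [dysonInv_parts, card_addFirstColumn]
  omega

theorem rank_dysonInv_le (s : ℕ) (l : Nat.Partition (n + s + 1)) (h : (s : ℤ) ≤ rank l) :
    rank (dysonInv s l h) ≤ s + 2 := by
  have hcard := card_dysonInv s l h
  have hsup : (dysonInv s l h).parts.sup ≤ l.parts.sup + 1 := by
    rw [dysonInv_parts]
    refine (sup_addFirstColumn_le _ _).trans (Nat.add_le_add_right ?_ 1)
    exact Multiset.sup_le.mpr fun x hx => le_sup (mem_of_mem_erase hx)
  simp only [rank]
  omega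

def dysonEquiv (n s : ℕ) :
    {l : Nat.Partition n // rank l ≤ s + 2} ≃
      {l : Nat.Partition (n + s + 1) // (s : ℤ) ≤ rank l} where
  toFun l := ⟨dysonMap s l.1, le_rank_dysonMap s l.1⟩
  invFun l := ⟨dysonInv s l.1 l.2, rank_dysonInv_le s l.1 l.2⟩
  left_inv := by
    rintro ⟨l, h⟩
    refine Subtype.ext (Nat.Partition.ext ?_)
    have hcount : card l.parts + s + 1 - (s + 1) - card (dropFirstColumn l.parts) =
        card l.parts - card (dropFirstColumn l.parts) := by omega
    simp only
    rw [dysonInv_parts, sup_dysonMap h, dysonMap_parts, erase_cons_head, hcount,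
      addFirstColumn_dropFirstColumn fun x hx => l.parts_pos hx]
  right_inv := by
    rintro ⟨l, h⟩
    refine Subtype.ext (Nat.Partition.ext ?_)
    have hE : ∀ x ∈ l.parts.erase l.parts.sup, 0 < x :=
      fun x hx => l.parts_pos (mem_of_mem_erase hx)
    simp only
    rw [dysonMap_parts, card_dysonInv, dysonInv_parts, dropFirstColumn_addFirstColumn hE,
      cons_erase (l.sup_mem_parts (by omega))]

end Dyson

def rankAtLeast (s n : ℕ) : ℕ := Nat.card {l : Nat.Partition n // (s : ℤ) ≤ rank l}

def rankAtLeastZ (s : ℕ) (x : ℤ) : ℤ := if 0 ≤ x then rankAtLeast s x.toNat else 0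

theorem rankAtLeast_add_rankAtLeast (s n : ℕ) :
    rankAtLeast s (n + s + 1) + rankAtLeast (s + 3) n = partitionCount n := by
  have hdyson : rankAtLeast s (n + s + 1) =
      Nat.card {l : Nat.Partition n // ¬ ((s + 3 : ℕ) : ℤ) ≤ rank l} :=
    (Nat.card_congr (dysonEquiv n s)).symm.trans
      (Nat.card_congr (Equiv.subtypeEquivRight fun l => by push_cast; omega))
  rw [hdyson, add_comm, rankAtLeast, partitionCount, ← Nat.card_sum]
  exact Nat.card_congr (Equiv.sumCompl _)

theorem rankAtLeast_eq_zero {s n : ℕ} (hs : 1 ≤ s) (hn : n ≤ s) : rankAtLeast s n = 0 := by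
  refine Nat.card_eq_zero.mpr (Or.inl ⟨fun ⟨l, hl⟩ => ?_⟩)
  simp only [rank] at hl
  rcases Nat.eq_zero_or_pos n with rfl | hn0
  · simp only [Nat.Partition.partition_zero_parts, Multiset.sup_zero, Nat.bot_eq_zero,
      Multiset.card_zero] at hl
    omega
  · have hsup := Nat.Partition.le_of_mem_parts (l.sup_mem_parts hn0.ne')
    have hcard : 0 < Multiset.card l.parts :=
      Multiset.card_pos_iff_exists_mem.mpr ⟨_, l.sup_mem_parts hn0.ne'⟩
    omega

@[simp]
theorem pZ_natCast (n : ℕ) : pZ n = partitionCount n := by simp [pZ]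

theorem pZ_of_neg {x : ℤ} (hx : x < 0) : pZ x = 0 := if_neg (not_le.mpr hx)

@[simp]
theorem rankAtLeastZ_natCast (s n : ℕ) : rankAtLeastZ s n = rankAtLeast s n := by
  simp [rankAtLeastZ]

theorem rankAtLeastZ_of_neg (s : ℕ) {x : ℤ} (hx : x < 0) : rankAtLeastZ s x = 0 :=
  if_neg (not_le.mpr hx)

theorem rankAtLeastZ_eq_sub {s : ℕ} (hs : 1 ≤ s) (x : ℤ) :
    rankAtLeastZ s x = pZ (x - (s + 1)) - rankAtLeastZ (s + 3) (x - (s + 1)) := by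
  rcases lt_or_ge x (s + 1) with hx | hx
  · have hneg : x - (s + 1) < 0 := by omega
    rw [pZ_of_neg hneg, rankAtLeastZ_of_neg (s + 3) hneg, sub_self]
    rcases lt_or_ge x 0 with hx0 | hx0
    · exact rankAtLeastZ_of_neg s hx0
    · lift x to ℕ using hx0
      rw [rankAtLeastZ_natCast, rankAtLeast_eq_zero hs (by omega), Nat.cast_zero]
  · obtain ⟨n, rfl⟩ : ∃ n : ℕ, x = n + s + 1 := ⟨(x - (s + 1)).toNat, by omega⟩
    have hrec := rankAtLeast_add_rankAtLeast s n
    rw [show (n : ℤ) + s + 1 = (n + s + 1 : ℕ) by push_cast; ring,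
      show ((n + s + 1 : ℕ) : ℤ) - (s + 1) = n by push_cast; ring]
    simp only [rankAtLeastZ_natCast, pZ_natCast]
    omega

theorem RZ_of_neg {x : ℤ} (hx : x < 0) : RZ x = 0 := if_neg (not_le.mpr hx)

-- On `ℤ`, `0 < a` unfolds to `0 + 1 ≤ a`.
theorem RZ_eq_rankAtLeastZ_one (x : ℤ) : RZ x = rankAtLeastZ 1 x := rfl

-- Mathlib's `pentagonal (-k)`, as a function on `ℕ`.
def pentagonalNeg (k : ℕ) : ℕ := k * (3 * k + 1) / 2

theorem pentagonalNeg_succ (k : ℕ) : pentagonalNeg (k + 1) = pentagonalNeg k + (3 * k + 2) := by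
  rw [pentagonalNeg, pentagonalNeg, ← Nat.add_mul_div_right _ _ two_pos]
  congr 1
  ring

theorem le_pentagonalNeg (k : ℕ) : k ≤ pentagonalNeg k := by
  induction k with
  | zero => exact Nat.zero_le _
  | succ k ih => rw [pentagonalNeg_succ]; omega

open Finset

theorem RZ_eq_sum_add (x : ℤ) (K : ℕ) :
    RZ x = ∑ k ∈ range K, (-1) ^ k * pZ (x - pentagonalNeg (k + 1)) +
      (-1) ^ K * rankAtLeastZ (3 * K + 1) (x - pentagonalNeg K) := by
  induction K with
  | zero => simp [pentagonalNeg, RZ_eq_rankAtLeastZ_one]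
  | succ K ih =>
    have hx : x - pentagonalNeg K - ((3 * K + 1 : ℕ) + 1) = x - pentagonalNeg (K + 1) := by
      rw [pentagonalNeg_succ]; push_cast; ring
    rw [ih, rankAtLeastZ_eq_sub (by omega), hx, sum_range_succ, pow_succ,
      show 3 * K + 1 + 3 = 3 * (K + 1) + 1 by ring]
    ring

theorem RZ_eq_sum (x : ℤ) (K : ℕ) (hK : x < K) :
    RZ x = ∑ k ∈ range K, (-1) ^ k * pZ (x - pentagonalNeg (k + 1)) := by
  have := le_pentagonalNeg K
  rw [RZ_eq_sum_add x K, rankAtLeastZ_of_neg _ (by omega), mul_zero, add_zero]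

theorem sum_sum_toFinset_parts {M : Type*} [AddCommMonoid M] (f : ℕ → M) (n : ℕ) :
    ∑ l : Nat.Partition n, ∑ d ∈ l.parts.toFinset, f d =
      ∑ d ∈ Icc 1 n, partitionCount (n - d) • f d := by
  have hparts (l : Nat.Partition n) : l.parts.toFinset = {d ∈ Icc 1 n | d ∈ l.parts} := by
    ext d
    simp only [Multiset.mem_toFinset, mem_filter, mem_Icc, iff_and_self]
    exact fun hd => ⟨l.parts_pos hd, Nat.Partition.le_of_mem_parts hd⟩
  have hcount (d : ℕ) (hd : d ∈ Icc 1 n) :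
      #{l : Nat.Partition n | d ∈ l.parts} = partitionCount (n - d) := by
    obtain ⟨hd1, hdn⟩ := mem_Icc.mp hd
    rw [partitionCount, ← Nat.card_congr (Nat.Partition.partitionWithPartEquiv hd1 hdn),
      Nat.card_eq_fintype_card, Fintype.card_subtype]
  calc ∑ l : Nat.Partition n, ∑ d ∈ l.parts.toFinset, f d
      = ∑ d ∈ Icc 1 n, ∑ l : Nat.Partition n, if d ∈ l.parts then f d else 0 := by
        simp_rw [hparts, sum_filter]
        exact sum_comm
    _ = ∑ d ∈ Icc 1 n, partitionCount (n - d) • f d := by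
        refine sum_congr rfl fun d hd => ?_
        rw [← sum_filter, sum_const, hcount d hd]

theorem aZ_of_neg (r m : ℕ) {x : ℤ} (hx : x < 0) : aZ r m x = 0 := if_neg (not_le.mpr hx)

theorem aZ_natCast_eq_sum (r m n : ℕ) :
    aZ r m n = ∑ d ∈ Icc 1 n, if d % m = r then (d : ℤ) * pZ (n - d) else 0 := by
  simp only [aZ, Nat.cast_nonneg, if_true, Int.toNat_natCast, a, sum_sum_toFinset_parts,
    smul_eq_mul, Nat.cast_sum, Nat.cast_mul]
  refine sum_congr rfl fun d hd => ?_
  rw [← Nat.cast_sub (mem_Icc.mp hd).2, pZ_natCast]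
  split_ifs <;> simp [mul_comm]

theorem aZ_eq_sum {r m : ℕ} (h : r < m) (x : ℤ) (K : ℕ) (hK : x < K) :
    aZ r m x = ∑ j ∈ range K, ((m * j + r : ℕ) : ℤ) * pZ (x - (m * j + r : ℕ)) := by
  rcases lt_or_ge x 0 with hx | hx
  · rw [aZ_of_neg r m hx]
    refine (sum_eq_zero fun j _ => ?_).symm
    rw [pZ_of_neg (by omega), mul_zero]
  lift x to ℕ using hx
  rw [aZ_natCast_eq_sum]
  symm
  refine sum_bij_ne_zero (fun j _ _ => m * j + r) ?_ ?_ ?_ ?_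
  · intro j _ hj
    obtain ⟨hd0, hp⟩ := mul_ne_zero_iff.mp hj
    have hdx : m * j + r ≤ x := by
      by_contra hlt
      exact hp (pZ_of_neg (by push_cast at hlt ⊢; omega))
    exact mem_Icc.mpr ⟨Nat.one_le_iff_ne_zero.mpr (Nat.cast_ne_zero.mp hd0), hdx⟩
  · intro j₁ _ _ j₂ _ _ hj
    exact Nat.eq_of_mul_eq_mul_left (by omega) (Nat.add_right_cancel hj)
  · intro d hd hd0
    have hdm : d % m = r := by
      by_contra hne
      exact hd0 (if_neg hne)
    have hdiv : m * (d / m) + r = d := hdm ▸ Nat.div_add_mod d m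
    refine ⟨d / m, mem_range.mpr ?_, ?_, hdiv⟩
    · have := Nat.div_le_self d m
      have := (mem_Icc.mp hd).2
      omega
    · rw [hdiv]
      rwa [if_pos hdm] at hd0
  · intro j _ _
    rw [if_pos (by rw [Nat.mul_add_mod, Nat.mod_eq_of_lt h])]

/-- Merca, Corollary 5.2(ii). -/
theorem a_pentagonal_R (m n r : ℕ) (h : r < m) :
    (∑' j : ℕ, (-1 : ℤ) ^ j * aZ r m ((n : ℤ) - ((j + 1) * (3 * (j + 1) + 1) / 2 : ℕ))) =
      ∑' j : ℕ, ((m * j + r : ℕ) : ℤ) * RZ ((n : ℤ) - (m * j + r : ℕ)) := by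
  change ∑' k : ℕ, (-1 : ℤ) ^ k * aZ r m (n - pentagonalNeg (k + 1)) = _
  have hL : ∀ k ∉ range (n + 1),
      (-1 : ℤ) ^ k * aZ r m (n - pentagonalNeg (k + 1)) = 0 := fun k hk => by
    have := le_pentagonalNeg (k + 1)
    rw [aZ_of_neg r m (by rw [mem_range] at hk; omega), mul_zero]
  have hR : ∀ j ∉ range (n + 1), ((m * j + r : ℕ) : ℤ) * RZ (n - (m * j + r : ℕ)) = 0 :=
    fun j hj => by
      have := Nat.le_mul_of_pos_left j (by omega : 0 < m)
      rw [RZ_of_neg (by rw [mem_range] at hj; push_cast; omega), mul_zero]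
  rw [tsum_eq_sum hL, tsum_eq_sum hR]
  calc ∑ k ∈ range (n + 1), (-1) ^ k * aZ r m (n - pentagonalNeg (k + 1))
      = ∑ k ∈ range (n + 1), ∑ j ∈ range (n + 1), (-1) ^ k *
          (((m * j + r : ℕ) : ℤ) * pZ (n - (m * j + r : ℕ) - pentagonalNeg (k + 1))) :=
        sum_congr rfl fun k _ => by
          rw [aZ_eq_sum h _ (n + 1) (by omega), mul_sum]
          simp only [sub_right_comm]
    _ = ∑ j ∈ range (n + 1), ((m * j + r : ℕ) : ℤ) * RZ (n - (m * j + r : ℕ)) := by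
        rw [sum_comm]
        refine sum_congr rfl fun j _ => ?_
        rw [RZ_eq_sum _ (n + 1) (by omega), mul_sum]
        exact sum_congr rfl fun k _ => by ring
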